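/- Let n ≥ 5 be odd with n ≡ 3 (mod 4), let K/ℚ be Galois with Gal(K/ℚ) ≅ C_n generated by σ, write α_i = σ^i(α). Suppose α ∈ K is an algebraic unit with |α₀| > |α₁| > |α_{-1}| > |α₂| > |α_{-2}| > ... and exactly (n+1)/2 conjugates outside the unit circle. Then β = M(α) has exactly (n+1)/2 or exactly (n-1)/2 conjugates outside the unit circle, and its conjugates satisfy |β₀| > |β_{-1}| > |β₁| > |β_{-2}| > |β₂| > .... -/

import Mathlib

open Polynomial

noncomputable def intMinpoly (α : ℂ) : Polynomial ℤ :=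
  (IsLocalization.integerNormalization (nonZeroDivisors ℤ) (minpoly ℚ α)).primPart

noncomputable def mahlerM (α : ℂ) : ℝ :=
  ((intMinpoly α).leadingCoeff.natAbs : ℝ) *
    (((intMinpoly α).map (Int.castRingHom ℂ)).roots.map (fun z => max 1 ‖z‖)).prod

noncomputable def mahlerC (α : ℂ) : ℂ := (mahlerM α : ℝ)

def TorsionFree (α : ℂ) : Prop :=
  ∀ σ : ℂ ≃ₐ[ℚ] ℂ, σ α ≠ α → ∀ n : ℕ, 0 < n → (α / σ α) ^ n ≠ 1

/-!
Write `A j = log |α_j|`. Then `A` is `n`-periodic, sums to `log |N(α)| = 0` over a period, and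
decreases along the order `0, 1, -1, 2, -2, …`; with `n = 4m - 1` the conjugates outside the unit
circle are `α_{1-m}, …, α_m`, so `β = ∏_{k=1-m}^{m} α_k` and `log |β_j| = W j`, the sum of `A` over
the window `[j - m + 1, j + m]`.

Reflecting the window of `j` in `c/2` turns it into that of `c - 1 - j`, so `W j - W (c - 1 - j)`
is the window sum of `f k = A k - A (c - k)`. This `f` is antisymmetric about `c/2` and, by
periodicity, about `(c + n)/2`: the parts of the window symmetric about these points cancel, and
the rest lies between them, where `f > 0` by the ordering of the `α_k`. Taking `c = 0` for `A`
and `c = 1` for `-A` shows that `W` decreases along `0, -1, 1, -2, 2, …`. Finally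
`W (-m) + W (m - 1) = A 0 > 0` and `W (-m) + W m = A (2m) ≤ 0`, together with this ordering, give
`W (m - 1) > 0 > W m`, so `β` has `2m` or `2m - 1` conjugates outside the unit circle.
-/

open Finset Function

theorem intMinpoly_associated_minpoly {x : ℂ} (hx : IsIntegral ℤ x) :
    Associated (intMinpoly x) (minpoly ℤ x) := by
  obtain ⟨b, hb0, hb⟩ :=
    IsLocalization.integerNormalization_spec (nonZeroDivisors ℤ) (minpoly ℚ x)
  have hnorm : IsLocalization.integerNormalization (nonZeroDivisors ℤ) (minpoly ℚ x) =
      C b * minpoly ℤ x := by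
    refine Polynomial.map_injective (algebraMap ℤ ℚ) (RingHom.injective_int _) ?_
    rw [hb, minpoly.isIntegrallyClosed_eq_field_fractions' ℚ hx, Polynomial.map_mul,
      Polynomial.map_C, Algebra.smul_def, Polynomial.algebraMap_apply]
  rw [intMinpoly, hnorm, primPart_mul (mul_ne_zero (by simpa using nonZeroDivisors.ne_zero hb0)
      (minpoly.ne_zero hx)), (minpoly.monic hx).isPrimitive.primPart_eq]
  exact associated_unit_mul_left _ _ (isUnit_primPart_C _)

theorem mahlerM_eq_prod_roots {x : ℂ} (hx : IsIntegral ℤ x) :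
    mahlerM x = (((minpoly ℚ x).map (algebraMap ℚ ℂ)).roots.map fun z => max 1 ‖z‖).prod := by
  obtain ⟨u, hu⟩ := (intMinpoly_associated_minpoly hx).symm
  obtain ⟨r, hr, hru⟩ := Polynomial.isUnit_iff.mp u.isUnit
  have hmap : (minpoly ℤ x).map (Int.castRingHom ℂ) = (minpoly ℚ x).map (algebraMap ℚ ℂ) := by
    rw [minpoly.isIntegrallyClosed_eq_field_fractions' ℚ hx, Polynomial.map_map]
    congr 1
  rw [mahlerM, ← hu, ← hru, mul_comm (minpoly ℤ x), leadingCoeff_mul_monic (minpoly.monic hx),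
    leadingCoeff_C, Int.natAbs_of_isUnit hr, Polynomial.map_mul, Polynomial.map_C, hmap,
    roots_C_mul _ (by simpa using hr.ne_zero)]
  simp

theorem roots_minpoly_map_eq {F L E ι : Type*} [Field F] [Field L] [Field E] [Algebra F L]
    [Algebra F E] [FiniteDimensional F L] (φ : L →ₐ[F] E) (x : L) (s : Finset ι)
    (e : ι → L ≃ₐ[F] L) (he : Set.InjOn (fun i => e i x) s)
    (hcard : Module.finrank F L ≤ s.card) :
    ((minpoly F (φ x)).map (algebraMap F E)).roots = s.val.map fun i => φ (e i x) := by
  have hx : IsIntegral F x := .of_finite F x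
  rw [minpoly.algHom_eq φ φ.injective]
  have hnodup : (s.val.map fun i => φ (e i x)).Nodup :=
    Multiset.Nodup.map_on (fun i hi j hj h => he hi hj (φ.injective h)) s.nodup
  refine (Multiset.eq_of_le_of_card_le ((Multiset.le_iff_subset hnodup).2 ?_) ?_).symm
  · intro y hy
    obtain ⟨i, -, rfl⟩ := Multiset.mem_map.1 hy
    rw [mem_roots_map (minpoly.ne_zero hx), ← aeval_def]
    exact minpoly.aeval_algHom F (φ.comp (e i).toAlgHom) x
  · calc _ ≤ _ := card_roots' _
      _ = (minpoly F x).natDegree := natDegree_map _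
      _ ≤ s.card := (minpoly.natDegree_le x).trans hcard
      _ = _ := by simp

section Intervals

variable {M : Type*} [AddCommMonoid M]

theorem sum_Icc_add_sum_Icc (f : ℤ → M) {a b c : ℤ} (hab : a ≤ b + 1) (hbc : b ≤ c) :
    ∑ k ∈ Icc a b, f k + ∑ k ∈ Icc (b + 1) c, f k = ∑ k ∈ Icc a c, f k := by
  rw [← sum_union (disjoint_left.2 fun k hk hk' => by simp only [mem_Icc] at hk hk'; omega)]
  congr 1
  ext k
  simp only [mem_union, mem_Icc]
  omega

theorem sum_Icc_const_sub (f : ℤ → M) (a b c : ℤ) :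
    ∑ k ∈ Icc a b, f (c - k) = ∑ k ∈ Icc (c - b) (c - a), f k := by
  refine sum_nbij' (c - ·) (c - ·) ?_ ?_ ?_ ?_ fun _ _ => rfl <;> intro k hk <;>
    simp only [mem_Icc] at hk ⊢ <;> omega

end Intervals

section Antisymmetric

variable {f : ℤ → ℝ} {c : ℤ}

theorem sum_Icc_eq_zero_of_antisymm (hf : ∀ k, f (c - k) = -f k) (a : ℤ) :
    ∑ k ∈ Icc a (c - a), f k = 0 := by
  have h := sum_Icc_const_sub f a (c - a) c
  simp only [hf, sum_neg_distrib, sub_sub_cancel] at h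
  linarith

theorem sum_Icc_eq_sum_Icc_max_of_antisymm (hf : ∀ k, f (c - k) = -f k) {a b : ℤ}
    (h : c - a ≤ b) : ∑ k ∈ Icc a b, f k = ∑ k ∈ Icc (max a (c - a + 1)) b, f k := by
  rcases lt_or_ge (c - a) a with hca | hac
  · rw [max_eq_left (by omega)]
  · rw [← sum_Icc_add_sum_Icc f (by omega) h, sum_Icc_eq_zero_of_antisymm hf, zero_add,
      max_eq_right (by omega)]

theorem sum_Icc_eq_sum_Icc_min_of_antisymm (hf : ∀ k, f (c - k) = -f k) {a b : ℤ}
    (h : a ≤ c - b) : ∑ k ∈ Icc a b, f k = ∑ k ∈ Icc a (min b (c - b - 1)), f k := by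
  rcases lt_or_ge b (c - b) with hbc | hcb
  · rw [min_eq_left (by omega)]
  · have hzero := sum_Icc_eq_zero_of_antisymm hf (c - b)
    rw [sub_sub_cancel] at hzero
    rw [← sum_Icc_add_sum_Icc f (b := c - b - 1) (by omega) (by omega), sub_add_cancel, hzero,
      add_zero, min_eq_right (by omega)]

theorem sum_Icc_pos_of_antisymm {N : ℤ} (hf : ∀ k, f (c - k) = -f k)
    (hfN : ∀ k, f (c + N - k) = -f k) (hpos : ∀ k, c < 2 * k → 2 * k < c + N → 0 < f k)
    {a b : ℤ} (hab : a ≤ b) (hlen : b - a + 1 < N) (hlo : c < a + b) (hhi : a + b < c + N) :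
    0 < ∑ k ∈ Icc a b, f k := by
  rw [sum_Icc_eq_sum_Icc_max_of_antisymm hf (by omega),
    sum_Icc_eq_sum_Icc_min_of_antisymm hfN (by omega)]
  refine sum_pos (fun k hk => ?_) (nonempty_Icc.2 (by omega))
  rw [mem_Icc] at hk
  exact hpos k (by omega) (by omega)

end Antisymmetric

noncomputable def windowSum (A : ℤ → ℝ) (m j : ℤ) : ℝ := ∑ k ∈ Icc (j - m + 1) (j + m), A k

theorem windowSum_neg (A : ℤ → ℝ) (m j : ℤ) : windowSum (-A) m j = -windowSum A m j := by
  simp [windowSum]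

theorem windowSum_eq_sum_add (A : ℤ → ℝ) (m j : ℤ) :
    windowSum A m j = ∑ k ∈ Icc (1 - m) m, A (j + k) := by
  rw [windowSum, show j - m + 1 = j + (1 - m) by ring, ← map_add_left_Icc, sum_map]
  rfl

theorem windowSum_sub_windowSum (A : ℤ → ℝ) (m c j : ℤ) :
    windowSum A m j - windowSum A m (c - 1 - j) =
      ∑ k ∈ Icc (j - m + 1) (j + m), (A k - A (c - k)) := by
  rw [windowSum, windowSum, sum_sub_distrib, sum_Icc_const_sub]
  ring_nf

theorem windowSum_lt_windowSum_of_reflect {A : ℤ → ℝ} {N m c : ℤ} (hA : Periodic A N)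
    (hm : 0 < m) (hmN : 2 * m < N) (hAc : ∀ k, c < 2 * k → 2 * k < c + N → A (c - k) < A k)
    {j : ℤ} (hj : c < 2 * j + 1) (hj' : 2 * j + 1 < c + N) :
    windowSum A m (c - 1 - j) < windowSum A m j := by
  have hsum := sum_Icc_pos_of_antisymm (f := fun k => A k - A (c - k)) (c := c) (N := N)
    (fun k => by simp only [sub_sub_cancel, neg_sub])
    (fun k => by
      simp only [show c + N - k = c - k + N by ring, show c - (c - k + N) = k - N by ring,
        hA (c - k), hA.sub_eq k, neg_sub])
    (fun k hk hk' => sub_pos.2 (hAc k hk hk'))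
    (a := j - m + 1) (b := j + m) (by omega) (by omega) (by omega) (by omega)
  linarith [windowSum_sub_windowSum A m c j]

theorem windowSum_neg_add_windowSum_sub_one (A : ℤ → ℝ) {m : ℤ} (hm : 0 < m) :
    windowSum A m (-m) + windowSum A m (m - 1) = ∑ k ∈ Icc (1 - 2 * m) (2 * m - 1), A k + A 0 := by
  have hfull := sum_Icc_add_sum_Icc A (a := 1 - 2 * m) (b := 0) (c := 2 * m - 1)
    (by omega) (by omega)
  have hright := sum_Icc_add_sum_Icc A (a := 0) (b := 0) (c := 2 * m - 1) (by omega) (by omega)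
  rw [Icc_self, sum_singleton] at hright
  simp only [windowSum]
  ring_nf at *
  linarith

theorem windowSum_neg_add_windowSum (A : ℤ → ℝ) {m : ℤ} (hm : 0 < m) :
    windowSum A m (-m) + windowSum A m m = ∑ k ∈ Icc (1 - 2 * m) (2 * m - 1), A k + A (2 * m) := by
  have hfull := sum_Icc_add_sum_Icc A (a := 1 - 2 * m) (b := 0) (c := 2 * m - 1)
    (by omega) (by omega)
  have hright := sum_Icc_add_sum_Icc A (a := 1) (b := 2 * m - 1) (c := 2 * m) (by omega) (by omega)
  rw [sub_add_cancel, Icc_self, sum_singleton] at hright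
  simp only [windowSum]
  ring_nf at *
  linarith

/-- `0, 1, -1, 2, -2, …`: the order of the conjugates of `α` by decreasing modulus. -/
def zigzag (p : ℕ) : ℤ := if p % 2 = 0 then -(p / 2 : ℕ) else (p / 2 : ℕ) + 1

@[simp] theorem zigzag_zero : zigzag 0 = 0 := rfl

@[simp] theorem zigzag_two_mul (i : ℕ) : zigzag (2 * i) = -i := by
  simp [zigzag]

@[simp] theorem zigzag_two_mul_add_one (i : ℕ) : zigzag (2 * i + 1) = i + 1 := by
  simp [zigzag, Nat.add_mod]; omega

@[to_additive]
theorem prod_range_zigzag {M : Type*} [CommMonoid M] (f : ℤ → M) {N : ℕ} {a b : ℤ}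
    (ha : a = 1 - ((N + 1) / 2 : ℕ)) (hb : b = (N / 2 : ℕ)) :
    ∏ p ∈ range N, f (zigzag p) = ∏ k ∈ Icc a b, f k := by
  refine prod_nbij' zigzag (fun k => if 0 < k then (2 * k - 1).toNat else (-2 * k).toNat)
    ?_ ?_ ?_ ?_ fun _ _ => rfl <;> intro x hx <;>
    simp only [mem_range, mem_Icc, zigzag] at hx ⊢ <;>
    split_ifs <;> omega

theorem strictAntiOn_comp_zigzag {β : Type*} [Preorder β] {g : ℤ → β} {N : ℕ}
    (h₁ : ∀ i : ℕ, 2 * i + 1 < N → g (i + 1) < g (-i))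
    (h₂ : ∀ i : ℕ, 1 ≤ i → 2 * i < N → g (-i) < g i) :
    StrictAntiOn (g ∘ zigzag) (Set.Iio N) := by
  refine (strictAntiOn_Iic_of_succ_lt (n := N - 1) fun p hp => ?_).mono
    fun p hp => by simp only [Set.mem_Iio, Set.mem_Iic] at hp ⊢; omega
  obtain ⟨i, rfl | rfl⟩ := Nat.even_or_odd' p
  · simpa using h₁ i (by omega)
  · simpa [show 2 * i + 1 + 1 = 2 * (i + 1) by ring] using h₂ (i + 1) (by omega) (by omega)

theorem AntitoneOn.lt_iff_lt_card_filter {β : Type*} [LinearOrder β] {g : ℕ → β} {N : ℕ}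
    (hg : AntitoneOn g (Set.Iio N)) (t : β) {p : ℕ} (hp : p < N) :
    t < g p ↔ p < #{q ∈ range N | t < g q} := by
  constructor
  · intro hpos
    have hsub : range (p + 1) ⊆ {q ∈ range N | t < g q} := fun q hq => by
      simp only [mem_range, mem_filter] at hq ⊢
      exact ⟨by omega, hpos.trans_le (hg (by simp; omega) (by simp; omega) (by omega))⟩
    simpa using card_le_card hsub
  · intro hlt
    by_contra hneg
    have hsub : {q ∈ range N | t < g q} ⊆ range p := fun q hq => by
      simp only [mem_range, mem_filter] at hq ⊢
      by_contra hpq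
      exact hneg (hq.2.trans_le (hg (by simp; omega) (by simpa using hq.1) (by omega)))
    have := card_le_card hsub
    simp only [card_range] at this
    omega

section Sequence

variable {A : ℤ → ℝ} {n m : ℕ}

theorem windowSum_neg_sub_one_lt (hnm : n + 1 = 4 * m) (hA : Periodic A n)
    (h₂ : ∀ i : ℕ, 1 ≤ i → 2 * i < n → A (-i) < A i) {i : ℕ} (hi : 2 * i + 1 < n) :
    windowSum A m (-i - 1) < windowSum A m i := by
  have key := windowSum_lt_windowSum_of_reflect (N := n) (c := 0) (m := m) (j := i) hA
    (hm := by omega) (hmN := by omega) (fun k hk hk' => ?_) (hj := by omega) (hj' := by omega)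
  · rwa [zero_sub, sub_eq_add_neg, add_comm, ← sub_eq_add_neg] at key
  · lift k to ℕ using (by omega)
    simpa using h₂ k (by omega) (by omega)

theorem windowSum_lt_windowSum_neg (hnm : n + 1 = 4 * m) (hA : Periodic A n)
    (h₁ : ∀ i : ℕ, 2 * i + 1 < n → A (i + 1) < A (-i)) {i : ℕ} (hi : 1 ≤ i) (hin : 2 * i < n) :
    windowSum A m i < windowSum A m (-i) := by
  have key := windowSum_lt_windowSum_of_reflect (A := -A) (N := n) (c := 1) (m := m) (j := i)
    (fun k => by simp only [Pi.neg_apply, hA k]) (hm := by omega) (hmN := by omega)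
    (fun k hk hk' => ?_) (hj := by omega) (hj' := by omega)
  · rwa [windowSum_neg, windowSum_neg, sub_self, zero_sub, neg_lt_neg_iff] at key
  · obtain ⟨k, rfl⟩ : ∃ k' : ℕ, k = k' + 1 := ⟨(k - 1).toNat, by omega⟩
    simpa using h₁ k (by omega)

theorem card_windowSum_pos (hnm : n + 1 = 4 * m) (hA : Periodic A n)
    (h₁ : ∀ i : ℕ, 2 * i + 1 < n → A (i + 1) < A (-i))
    (h₂ : ∀ i : ℕ, 1 ≤ i → 2 * i < n → A (-i) < A i)
    (hsum : ∑ p ∈ range n, A (zigzag p) = 0) (hpos : ∀ p < n, 0 < A (zigzag p) ↔ p < 2 * m) :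
    #{p ∈ range n | 0 < windowSum A m (-zigzag p)} = 2 * m ∨
      #{p ∈ range n | 0 < windowSum A m (-zigzag p)} = 2 * m - 1 := by
  have hA0 : 0 < A 0 := by simpa using (hpos 0 (by omega)).2 (by omega)
  have hA2m : A (2 * m) ≤ 0 := by
    have h := (hpos (2 * (2 * m - 1)) (by omega)).not.2 (by omega)
    rw [not_lt, zigzag_two_mul] at h
    rwa [← hA.sub_eq, show (2 * m : ℤ) - n = -((2 * m - 1 : ℕ) : ℤ) by omega]
  have hfull : ∑ k ∈ Icc (1 - 2 * (m : ℤ)) (2 * m - 1), A k = 0 := by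
    rwa [← sum_range_zigzag A (N := n) (by omega) (by omega)]
  have hm : (0 : ℤ) < m := by omega
  have hWpos : 0 < windowSum A m (m - 1) := by
    have hlt := windowSum_neg_sub_one_lt hnm hA h₂ (i := m - 1) (by omega)
    rw [Nat.cast_sub (by omega), Nat.cast_one, neg_sub, sub_sub_cancel_left] at hlt
    linarith [windowSum_neg_add_windowSum_sub_one A hm]
  have hWneg : windowSum A m m < 0 := by
    linarith [windowSum_lt_windowSum_neg hnm hA h₁ (i := m) (by omega) (by omega),
      windowSum_neg_add_windowSum A hm]
  have hanti : StrictAntiOn (fun p => windowSum A m (-zigzag p)) (Set.Iio n) :=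
    strictAntiOn_comp_zigzag (g := fun j => windowSum A m (-j))
      (fun i hi => by
        simpa only [neg_add', neg_neg] using windowSum_neg_sub_one_lt hnm hA h₂ hi)
      (fun i hi hin => by simpa only [neg_neg] using windowSum_lt_windowSum_neg hnm hA h₁ hi hin)
  have hlo := (hanti.antitoneOn.lt_iff_lt_card_filter 0 (p := 2 * (m - 1)) (by omega)).1
    (by rwa [zigzag_two_mul, neg_neg, Nat.cast_sub (by omega), Nat.cast_one])
  have hhi := (hanti.antitoneOn.lt_iff_lt_card_filter 0 (p := 2 * m) (by omega)).not.1
    (by simpa using hWneg.le)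
  omega

end Sequence

theorem sum_range_comp_eq_sum_univ {G M : Type*} [Fintype G] [AddCommMonoid M] {n : ℕ}
    {e : ℕ → G} (he : Set.InjOn e (range n)) (hcard : Nat.card G = n) (F : G → M) :
    ∑ p ∈ range n, F (e p) = ∑ g, F g := by
  classical
  rw [← sum_image he, eq_univ_of_card ((range n).image e) (by
    rw [card_image_of_injOn he, card_range, ← hcard, Nat.card_eq_fintype_card])]

theorem sum_fin_pow_eq_sum_univ {G M : Type*} [Group G] [Fintype G] [AddCommMonoid M] {σ : G}
    {n : ℕ} (hσ : orderOf σ = n) (hcard : Nat.card G = n) (F : G → M) :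
    ∑ i : Fin n, F (σ ^ (i : ℕ)) = ∑ g, F g := by
  rw [Fin.sum_univ_eq_sum_range (fun p => F (σ ^ p)), sum_range_comp_eq_sum_univ _ hcard]
  rw [coe_range, ← hσ]
  exact pow_injOn_Iio_orderOf

theorem card_filter_fin_pow_eq {G : Type*} [Group G] [Fintype G] {σ : G} {n : ℕ}
    (hσ : orderOf σ = n) (hcard : Nat.card G = n) {e : ℕ → G} (he : Set.InjOn e (range n))
    (P : G → Prop) [DecidablePred P] :
    #{i : Fin n | P (σ ^ (i : ℕ))} = #{p ∈ range n | P (e p)} := by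
  simp only [card_filter]
  rw [sum_fin_pow_eq_sum_univ hσ hcard (fun g => if P g then 1 else 0),
    sum_range_comp_eq_sum_univ he hcard (fun g => if P g then 1 else 0)]

open NumberField in
theorem abs_norm_eq_one_of_isIntegral_inv {L : Type*} [Field L] [NumberField L] {x : L}
    (hx0 : x ≠ 0) (hx : IsIntegral ℤ x) (hx' : IsIntegral ℤ x⁻¹) : |Algebra.norm ℚ x| = 1 := by
  let u : (𝓞 L)ˣ := ⟨⟨x, hx⟩, ⟨x⁻¹, hx'⟩, RingOfIntegers.ext (mul_inv_cancel₀ hx0),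
    RingOfIntegers.ext (inv_mul_cancel₀ hx0)⟩
  have hu := isUnit_iff_norm.mp u.isUnit
  rwa [RingOfIntegers.coe_norm] at hu

theorem prod_range_max_one {f : ℕ → ℝ} {M N : ℕ} (hMN : M ≤ N) (hf : ∀ p < N, 1 < f p ↔ p < M) :
    ∏ p ∈ range N, max 1 (f p) = ∏ p ∈ range M, f p := by
  rw [← prod_range_mul_prod_Ico _ hMN, prod_eq_one (s := Ico M N) fun p hp => max_eq_left ?_,
    mul_one]
  · refine prod_congr rfl fun p hp => max_eq_right ?_
    rw [mem_range] at hp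
    exact ((hf p (by omega)).2 hp).le
  · simp only [mem_Ico] at hp
    exact not_lt.1 fun h => by have := (hf p hp.2).1 h; omega

section Conjugates

variable {K : IntermediateField ℚ ℝ}

theorem abs_coe_algEquiv_pos (g : K ≃ₐ[ℚ] K) {x : K} (hx : x ≠ 0) : 0 < |((g x : K) : ℝ)| := by
  simpa using hx

theorem sum_log_abs_algEquiv_eq_zero [FiniteDimensional ℚ K] [IsGalois ℚ K] {x : K} (hx0 : x ≠ 0)
    (hx : IsIntegral ℤ x) (hx' : IsIntegral ℤ x⁻¹) :
    ∑ g : K ≃ₐ[ℚ] K, Real.log |((g x : K) : ℝ)| = 0 := by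
  have : NumberField K := ⟨⟩
  rw [← Real.log_prod fun g _ => (abs_coe_algEquiv_pos g hx0).ne', ← abs_prod,
    ← IntermediateField.coe_prod, ← Algebra.norm_eq_prod_automorphisms]
  rw [eq_ratCast, SubfieldClass.coe_ratCast, ← Rat.cast_abs,
    abs_norm_eq_one_of_isIntegral_inv hx0 hx hx', Rat.cast_one, Real.log_one]

noncomputable def logAbsConj (σ : K ≃ₐ[ℚ] K) (x : K) (j : ℤ) : ℝ := Real.log |(((σ ^ j) x : K) : ℝ)|

variable {σ : K ≃ₐ[ℚ] K} {x : K}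

theorem logAbsConj_periodic {n : ℕ} (hσ : σ ^ n = 1) (x : K) : Periodic (logAbsConj σ x) n :=
  fun j => by rw [logAbsConj, logAbsConj, zpow_add, zpow_natCast, hσ, mul_one]

theorem logAbsConj_pos_iff (j : ℤ) : 0 < logAbsConj σ x j ↔ 1 < |(((σ ^ j) x : K) : ℝ)| :=
  Real.log_pos_iff (abs_nonneg _)

theorem logAbsConj_lt_logAbsConj_iff (hx : x ≠ 0) {i j : ℤ} :
    logAbsConj σ x i < logAbsConj σ x j ↔ |(((σ ^ i) x : K) : ℝ)| < |(((σ ^ j) x : K) : ℝ)| :=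
  Real.log_lt_log_iff (abs_coe_algEquiv_pos _ hx) (abs_coe_algEquiv_pos _ hx)

theorem logAbsConj_prod (hx : x ≠ 0) (s : Finset ℤ) (j : ℤ) :
    logAbsConj σ (∏ k ∈ s, (σ ^ k) x) j = ∑ k ∈ s, logAbsConj σ x (j + k) := by
  simp only [logAbsConj, map_prod, ← AlgEquiv.mul_apply, ← zpow_add,
    SubmonoidClass.coe_finsetProd, abs_prod]
  exact Real.log_prod fun k _ => (abs_coe_algEquiv_pos _ hx).ne'

theorem mahlerM_eq_prod_range_max_one [FiniteDimensional ℚ K] [IsGalois ℚ K] (hx : IsIntegral ℤ x)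
    {n : ℕ} (hcard : Nat.card (K ≃ₐ[ℚ] K) = n) {e : ℕ → K ≃ₐ[ℚ] K}
    (he : Set.InjOn (fun p => e p x) (range n)) :
    mahlerM ((x : ℝ) : ℂ) = ∏ p ∈ range n, max 1 |((e p x : K) : ℝ)| := by
  let φ : K →ₐ[ℚ] ℂ := (Complex.ofRealAm.restrictScalars ℚ).comp K.val
  change mahlerM (φ x) = _
  rw [mahlerM_eq_prod_roots (hx.map φ), roots_minpoly_map_eq φ x (range n) e he
    (by rw [card_range, ← hcard, IsGalois.card_aut_eq_finrank]), Multiset.map_map, prod_map_val]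
  refine prod_congr rfl fun p _ => ?_
  change max 1 ‖((e p x : ℝ) : ℂ)‖ = _
  rw [Complex.norm_real, Real.norm_eq_abs]

theorem injOn_zpow_zigzag_apply {n : ℕ}
    (hanti : StrictAntiOn (logAbsConj σ x ∘ zigzag) (Set.Iio n)) :
    Set.InjOn (fun p => (σ ^ zigzag p) x) (range n) := fun p hp q hq h =>
  hanti.injOn (by simpa using hp) (by simpa using hq)
    (congrArg (fun y : K => Real.log |(y : ℝ)|) h)

theorem injOn_zpow_zigzag {n : ℕ} (hanti : StrictAntiOn (logAbsConj σ x ∘ zigzag) (Set.Iio n)) :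
    Set.InjOn (fun p => σ ^ zigzag p) (range n) := fun p hp q hq h =>
  injOn_zpow_zigzag_apply hanti hp hq (by simp only [h])

theorem sum_logAbsConj_zigzag_eq_zero [FiniteDimensional ℚ K] [IsGalois ℚ K] {n : ℕ}
    (hcard : Nat.card (K ≃ₐ[ℚ] K) = n) (hinj : Set.InjOn (fun p => σ ^ zigzag p) (range n))
    (hx0 : x ≠ 0) (hx : IsIntegral ℤ x) (hx' : IsIntegral ℤ x⁻¹) :
    ∑ p ∈ range n, logAbsConj σ x (zigzag p) = 0 :=
  (sum_range_comp_eq_sum_univ hinj hcard fun g => Real.log |((g x : K) : ℝ)|).trans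
    (sum_log_abs_algEquiv_eq_zero hx0 hx hx')

theorem card_filter_one_lt_abs_eq [FiniteDimensional ℚ K] {n : ℕ} (hσ : orderOf σ = n)
    (hcard : Nat.card (K ≃ₐ[ℚ] K) = n) {e : ℕ → ℤ} (he : Set.InjOn (fun p => σ ^ e p) (range n)) :
    #{i : Fin n | 1 < |(((σ ^ (i : ℕ)) x : K) : ℝ)|} =
      #{p ∈ range n | 0 < logAbsConj σ x (e p)} := by
  rw [card_filter_fin_pow_eq hσ hcard he fun g => 1 < |((g x : K) : ℝ)|]
  simp only [logAbsConj_pos_iff]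

theorem logAbsConj_zigzag_pos_iff [FiniteDimensional ℚ K] {n : ℕ} (hσ : orderOf σ = n)
    (hcard : Nat.card (K ≃ₐ[ℚ] K) = n) (hanti : StrictAntiOn (logAbsConj σ x ∘ zigzag) (Set.Iio n))
    {p : ℕ} (hp : p < n) :
    0 < logAbsConj σ x (zigzag p) ↔ p < #{i : Fin n | 1 < |(((σ ^ (i : ℕ)) x : K) : ℝ)|} := by
  rw [card_filter_one_lt_abs_eq hσ hcard (injOn_zpow_zigzag hanti)]
  exact hanti.antitoneOn.lt_iff_lt_card_filter 0 hp

theorem mahlerM_eq_abs_prod_Icc [FiniteDimensional ℚ K] [IsGalois ℚ K] (hx : IsIntegral ℤ x)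
    {n m : ℕ} (hcard : Nat.card (K ≃ₐ[ℚ] K) = n) (hmn : 2 * m ≤ n)
    (hinj : Set.InjOn (fun p => (σ ^ zigzag p) x) (range n))
    (hpos : ∀ p < n, 0 < logAbsConj σ x (zigzag p) ↔ p < 2 * m) :
    mahlerM ((x : ℝ) : ℂ) = |((∏ k ∈ Icc (1 - m : ℤ) m, (σ ^ k) x : K) : ℝ)| := by
  rw [mahlerM_eq_prod_range_max_one hx hcard hinj,
    prod_range_max_one hmn fun p hp => (logAbsConj_pos_iff _).symm.trans (hpos p hp),
    prod_range_zigzag (fun k => |(((σ ^ k) x : K) : ℝ)|) (a := 1 - m) (b := m) (by omega)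
      (by omega),
    SubmonoidClass.coe_finsetProd, abs_prod]

end Conjugates

theorem cyclic_distribution_lemma_three_mod_four_general (n : ℕ)
    (hn4 : n % 4 = 3)
    (K : IntermediateField ℚ ℝ) [FiniteDimensional ℚ K] [IsGalois ℚ K]
    (hcard : Nat.card (K ≃ₐ[ℚ] K) = n)
    (σ : K ≃ₐ[ℚ] K) (hσ : orderOf σ = n)
    (α : K) (hα0 : α ≠ 0) (hint : IsIntegral ℤ α) (hintinv : IsIntegral ℤ α⁻¹)
    (hdist1 : ∀ i : ℕ, i ≤ (n - 3) / 2 →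
      |(((σ ^ (-(i : ℤ))) α : K) : ℝ)| > |(((σ ^ ((i : ℤ) + 1)) α : K) : ℝ)|)
    (hdist2 : ∀ i : ℕ, 1 ≤ i → i ≤ (n - 1) / 2 →
      |(((σ ^ (i : ℤ)) α : K) : ℝ)| > |(((σ ^ (-(i : ℤ))) α : K) : ℝ)|)
    (hout : (Finset.univ.filter
        (fun i : Fin n => 1 < |(((σ ^ (i : ℕ)) α : K) : ℝ)|)).card = (n + 1) / 2) :
    ∃ b : K, |(b : ℝ)| = mahlerM (((α : K) : ℝ) : ℂ) ∧
      ((Finset.univ.filter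
          (fun i : Fin n => 1 < |(((σ ^ (i : ℕ)) b : K) : ℝ)|)).card = (n + 1) / 2 ∨
        (Finset.univ.filter
          (fun i : Fin n => 1 < |(((σ ^ (i : ℕ)) b : K) : ℝ)|)).card = (n - 1) / 2) ∧
      (∀ i : ℕ, i ≤ (n - 3) / 2 →
        |(((σ ^ (i : ℤ)) b : K) : ℝ)| > |(((σ ^ (-(i : ℤ) - 1)) b : K) : ℝ)|) ∧
      (∀ i : ℕ, 1 ≤ i → i ≤ (n - 1) / 2 →
        |(((σ ^ (-(i : ℤ))) b : K) : ℝ)| > |(((σ ^ (i : ℤ)) b : K) : ℝ)|) := by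
  obtain ⟨m, hnm⟩ : ∃ m, n + 1 = 4 * m := ⟨(n + 1) / 4, by omega⟩
  set A := logAbsConj σ α
  have hA : Periodic A n := logAbsConj_periodic (hσ ▸ pow_orderOf_eq_one σ) α
  have h₁ : ∀ i : ℕ, 2 * i + 1 < n → A (i + 1) < A (-i) := fun i hi =>
    (logAbsConj_lt_logAbsConj_iff hα0).2 (hdist1 i (by omega))
  have h₂ : ∀ i : ℕ, 1 ≤ i → 2 * i < n → A (-i) < A i := fun i hi hin =>
    (logAbsConj_lt_logAbsConj_iff hα0).2 (hdist2 i hi (by omega))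
  have hanti := strictAntiOn_comp_zigzag h₁ h₂
  have hinj := injOn_zpow_zigzag hanti
  have hpos : ∀ p < n, 0 < A (zigzag p) ↔ p < 2 * m := fun p hp => by
    rw [logAbsConj_zigzag_pos_iff hσ hcard hanti hp, hout]
    omega
  set β := ∏ k ∈ Icc (1 - m : ℤ) m, (σ ^ k) α
  have hβ (j : ℤ) : logAbsConj σ β j = windowSum A m j := by
    rw [logAbsConj_prod hα0, windowSum_eq_sum_add]
  have hβ0 : β ≠ 0 := prod_ne_zero_iff.2 fun k _ => by simpa using hα0
  refine ⟨β, (mahlerM_eq_abs_prod_Icc hint hcard (by omega) (injOn_zpow_zigzag_apply hanti)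
    hpos).symm, ?_, fun i hi => ?_, fun i hi hin => ?_⟩
  · rw [card_filter_one_lt_abs_eq hσ hcard (e := fun p => -zigzag p)
      fun p hp q hq h => hinj hp hq (by simpa only [zpow_neg, inv_inj] using h)]
    simp only [hβ]
    have := card_windowSum_pos hnm hA h₁ h₂
      (sum_logAbsConj_zigzag_eq_zero hcard hinj hα0 hint hintinv) hpos
    omega
  · rw [gt_iff_lt, ← logAbsConj_lt_logAbsConj_iff hβ0, hβ, hβ]
    exact windowSum_neg_sub_one_lt hnm hA h₂ (by omega)
  · rw [gt_iff_lt, ← logAbsConj_lt_logAbsConj_iff hβ0, hβ, hβ]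
    exact windowSum_lt_windowSum_neg hnm hA h₁ hi (by omega)

theorem cyclic_distribution_lemma_three_mod_four (n : ℕ) (hn5 : 5 ≤ n)
    (hn4 : n % 4 = 3)
    (K : IntermediateField ℚ ℝ) [FiniteDimensional ℚ K] [IsGalois ℚ K]
    (hcard : Nat.card (K ≃ₐ[ℚ] K) = n)
    (σ : K ≃ₐ[ℚ] K) (hσ : orderOf σ = n)
    (α : K) (hα0 : α ≠ 0) (hint : IsIntegral ℤ α) (hintinv : IsIntegral ℤ α⁻¹)
    (hdist1 : ∀ i : ℕ, i ≤ (n - 3) / 2 →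
      |(((σ ^ (-(i : ℤ))) α : K) : ℝ)| > |(((σ ^ ((i : ℤ) + 1)) α : K) : ℝ)|)
    (hdist2 : ∀ i : ℕ, 1 ≤ i → i ≤ (n - 1) / 2 →
      |(((σ ^ (i : ℤ)) α : K) : ℝ)| > |(((σ ^ (-(i : ℤ))) α : K) : ℝ)|)
    (hout : (Finset.univ.filter
        (fun i : Fin n => 1 < |(((σ ^ (i : ℕ)) α : K) : ℝ)|)).card = (n + 1) / 2) :
    ∃ b : K, |(b : ℝ)| = mahlerM (((α : K) : ℝ) : ℂ) ∧
      ((Finset.univ.filter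
          (fun i : Fin n => 1 < |(((σ ^ (i : ℕ)) b : K) : ℝ)|)).card = (n + 1) / 2 ∨
        (Finset.univ.filter
          (fun i : Fin n => 1 < |(((σ ^ (i : ℕ)) b : K) : ℝ)|)).card = (n - 1) / 2) ∧
      (∀ i : ℕ, i ≤ (n - 3) / 2 →
        |(((σ ^ (i : ℤ)) b : K) : ℝ)| > |(((σ ^ (-(i : ℤ) - 1)) b : K) : ℝ)|) ∧
      (∀ i : ℕ, 1 ≤ i → i ≤ (n - 1) / 2 →
        |(((σ ^ (-(i : ℤ))) b : K) : ℝ)| > |(((σ ^ (i : ℤ)) b : K) : ℝ)|) :=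
  cyclic_distribution_lemma_three_mod_four_general n hn4 K hcard σ hσ α hα0 hint hintinv hdist1
    hdist2 hout
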